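/- arXiv:1102.1782 — 5 statements merged into one kernel-verified Lean document; each statement's English description precedes it below -/
import Mathlib

section
/- Let F be a finite field and let M_1, …, M_k be finitely many square matrices (of possibly different sizes) with entries in F(X), each of which is invertible over F(X). Then there exist a finite field extension K of F and an element c ∈ K such that: (i) every entry of every M_i, viewed as an element of K(X) via the inclusion F(X) ⊆ K(X), is regular at c, and (ii) for each i, the square matrix over K obtained by evaluating every entry of M_i at X = c is invertible over K. (This is the algebraic core of Proposition 2: from a feasible network code for the unit-delay network, specializing the delay parameter z to a suitable value z_Q in a large enough extension field yields a feasible network code for the instantaneous network, since the product of the determinants of the sink matrices is a nonzero rational function and hence nonvanishing at some point of a sufficiently large extension.) -/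
open Polynomial

set_option maxHeartbeats 1000000 in
set_option synthInstance.maxHeartbeats 400000 in
/-- Algebraic core of Proposition 2: over a finite field `F`, given finitely many square
matrices over `F(X)` (of possibly different sizes), each invertible over `F(X)`, there is
a finite field extension `K` of `F` and a point `c ∈ K` at which every entry of every
matrix is regular, and such that every matrix, evaluated entrywise at `X = c`, is
invertible over `K`. -/
theorem stmt_3 {F : Type} [Field F] [Fintype F] {k : ℕ} {n : Fin k → ℕ}
    (M : ∀ i : Fin k, Matrix (Fin (n i)) (Fin (n i)) (RatFunc F))
    (hinv : ∀ i, (M i).det ≠ 0) :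
    ∃ K : IntermediateField F (AlgebraicClosure F), FiniteDimensional F K ∧
      ∃ c : K,
        (∀ i a b, Polynomial.eval₂ (algebraMap F K) c ((M i a b).denom) ≠ 0) ∧
        (∀ i, IsUnit (Matrix.of fun a b => RatFunc.eval (algebraMap F K) c (M i a b))) := by
  classical
  -- common denominators
  set D : Fin k → F[X] := fun i => ∏ p : Fin (n i) × Fin (n i), (M i p.1 p.2).denom with hD
  set Q : ∀ i : Fin k, Fin (n i) → Fin (n i) → F[X] := fun i a b =>
    ∏ p ∈ Finset.univ.erase (a, b), (M i p.1 p.2).denom with hQ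
  have hDQ : ∀ i a b, D i = (M i a b).denom * Q i a b := fun i a b =>
    (Finset.mul_prod_erase _ _ (Finset.mem_univ (a, b))).symm
  have hD0 : ∀ i, D i ≠ 0 := fun i =>
    Finset.prod_ne_zero_iff.mpr fun p _ => RatFunc.denom_ne_zero _
  -- polynomial matrices
  set P : ∀ i : Fin k, Matrix (Fin (n i)) (Fin (n i)) F[X] := fun i =>
    Matrix.of fun a b => (M i a b).num * Q i a b with hPdef
  have hnum : ∀ i a b, algebraMap F[X] (RatFunc F) ((M i a b).denom) * M i a b
      = algebraMap F[X] (RatFunc F) ((M i a b).num) := by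
    intro i a b
    have hd : algebraMap F[X] (RatFunc F) (M i a b).denom ≠ 0 :=
      RatFunc.algebraMap_ne_zero (RatFunc.denom_ne_zero _)
    rw [mul_comm, eq_comm, ← div_eq_iff hd, RatFunc.num_div_denom]
  have hP : ∀ i a b, algebraMap F[X] (RatFunc F) (P i a b)
      = algebraMap F[X] (RatFunc F) (D i) * M i a b := by
    intro i a b
    have : P i a b = (M i a b).num * Q i a b := rfl
    rw [this, hDQ i a b, map_mul, map_mul, mul_assoc, mul_comm (algebraMap _ _ (Q i a b)),
      ← mul_assoc, hnum i a b]
  have hPdet : ∀ i, (P i).det ≠ 0 := by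
    intro i h
    have hmap : ((P i).map (algebraMap F[X] (RatFunc F)))
        = (algebraMap F[X] (RatFunc F) (D i)) • M i := by
      ext a b
      simp only [Matrix.map_apply, Matrix.smul_apply, smul_eq_mul]
      exact hP i a b
    have hdet : algebraMap F[X] (RatFunc F) ((P i).det)
        = (algebraMap F[X] (RatFunc F) (D i)) ^ (n i) * (M i).det := by
      rw [RingHom.map_det, RingHom.mapMatrix_apply, hmap, Matrix.det_smul, Fintype.card_fin]
    rw [h, map_zero] at hdet
    exact mul_ne_zero (pow_ne_zero _ (RatFunc.algebraMap_ne_zero (hD0 i))) (hinv i) hdet.symm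
  -- the big polynomial
  set B : F[X] := ∏ i : Fin k, (D i * (P i).det) with hB
  have hB0 : B ≠ 0 := Finset.prod_ne_zero_iff.mpr fun i _ => mul_ne_zero (hD0 i) (hPdet i)
  -- choose a point in the algebraic closure where B does not vanish
  have hB0' : B.map (algebraMap F (AlgebraicClosure F)) ≠ 0 :=
    (Polynomial.map_ne_zero_iff (algebraMap F (AlgebraicClosure F)).injective).mpr hB0
  have hex : ∃ x : AlgebraicClosure F, Polynomial.aeval x B ≠ 0 := by
    by_contra h
    push_neg at h
    apply hB0'
    apply Polynomial.zero_of_eval_zero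
    intro x
    rw [Polynomial.eval_map, ← Polynomial.aeval_def]
    exact h x
  obtain ⟨x, hx⟩ := hex
  have hxint : IsIntegral F x := (Algebra.IsIntegral.isIntegral (R := F) x)
  refine ⟨IntermediateField.adjoin F {x}, IntermediateField.adjoin.finiteDimensional hxint, ?_⟩
  set K := IntermediateField.adjoin F {x} with hK
  set c : K := ⟨x, IntermediateField.mem_adjoin_simple_self F x⟩ with hc
  have hvalc : K.val c = x := rfl
  have hBc : Polynomial.aeval c B ≠ 0 := by
    intro h
    apply hx
    rw [← hvalc, Polynomial.aeval_algHom_apply, h, map_zero]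
  have hfac : ∀ i, Polynomial.aeval c (D i) ≠ 0 ∧ Polynomial.aeval c ((P i).det) ≠ 0 := by
    intro i
    rw [hB, map_prod] at hBc
    have := Finset.prod_ne_zero_iff.mp hBc i (Finset.mem_univ i)
    rw [map_mul] at this
    exact ⟨left_ne_zero_of_mul this, right_ne_zero_of_mul this⟩
  have hdenom : ∀ i a b, Polynomial.eval₂ (algebraMap F K) c ((M i a b).denom) ≠ 0 := by
    intro i a b
    have h1 : Polynomial.aeval c (D i) ≠ 0 := (hfac i).1
    rw [hDQ i a b, map_mul] at h1
    have := left_ne_zero_of_mul h1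
    rwa [Polynomial.aeval_def] at this
  refine ⟨c, hdenom, ?_⟩
  intro i
  set f := algebraMap F (K : IntermediateField F (AlgebraicClosure F)) with hf
  set E : Matrix (Fin (n i)) (Fin (n i)) K :=
    Matrix.of fun a b => RatFunc.eval f c (M i a b) with hE
  have key : ∀ a b, Polynomial.aeval c (D i) * E a b = Polynomial.aeval c (P i a b) := by
    intro a b
    have h1 : Polynomial.eval₂ f c (RatFunc.denom (algebraMap F[X] (RatFunc F) (D i))) ≠ 0 := by
      rw [RatFunc.denom_algebraMap]
      simp
    have h2 := RatFunc.eval_mul (f := f) (a := (c : K)) h1 (hdenom i a b)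
    rw [← hP i a b] at h2
    rw [RatFunc.eval_algebraMap, RatFunc.eval_algebraMap] at h2
    simp only [Algebra.algebraMap_self, map_id, RingHom.id_apply, Polynomial.map_id] at h2
    have hEab : E a b = RatFunc.eval f c (M i a b) := rfl
    rw [hEab, Polynomial.aeval_def, Polynomial.aeval_def, ← h2]
  have hdetE : E.det ≠ 0 := by
    have hsmul : (Polynomial.aeval c (D i)) • E = (P i).map (Polynomial.aeval c) := by
      ext a b
      simp only [Matrix.smul_apply, Matrix.map_apply, smul_eq_mul]
      exact_mod_cast key a b
    have hdet2 : (Polynomial.aeval c (D i)) ^ (Fintype.card (Fin (n i))) * E.det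
        = Polynomial.aeval c ((P i).det) := by
      rw [← Matrix.det_smul, hsmul]
      have h3 := AlgHom.map_det (Polynomial.aeval (R := F) c) (P i)
      rw [AlgHom.mapMatrix_apply] at h3
      exact h3.symm
    intro h
    rw [h, mul_zero] at hdet2
    exact (hfac i).2 hdet2.symm
  rw [Matrix.isUnit_iff_isUnit_det]
  exact isUnit_iff_ne_zero.mpr hdetE
end

section
/- Let F be a field and h, n positive integers. Consider pairs (x_i, y_i) ∈ F(X)^h × F(X)^h with x_i · y_i ≠ 0 for 1 ≤ i ≤ n. Then there exist a subset S ⊆ {1, …, n} with 1 ∈ S and nonnegative integers β_i ≤ n − 1 for i ∈ S, such that the vector u = Σ_{i ∈ S} X^{β_i} · x_i ∈ F(X)^h satisfies u · y_j ≠ 0 for all 1 ≤ j ≤ n. (This is the algebraic core of Proposition 4: in the non-uniform delay-and-code scheme, a valid global encoding vector for an edge crossed by n ≤ |T| sink flow paths can always be formed by combining delayed copies of the predecessor global encoding vectors with coefficients only in {0,1} — i.e., over the binary field — provided at least n − 1 memory elements (delays in {0, …, n−1}) are available per incoming edge.) -/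
set_option synthInstance.maxHeartbeats 1000000
set_option maxHeartbeats 1000000

lemma X_pow_inj {F : Type*} [Field F] :
    Function.Injective (fun b : ℕ => (RatFunc.X : RatFunc F) ^ b) := by
  intro a b hab
  have h1 : (algebraMap (Polynomial F) (RatFunc F)) (Polynomial.X ^ a)
      = algebraMap (Polynomial F) (RatFunc F) (Polynomial.X ^ b) := by
    simpa [map_pow, RatFunc.algebraMap_X] using hab
  have h2 := IsFractionRing.injective (Polynomial F) (RatFunc F) h1
  simpa using congrArg Polynomial.natDegree h2

lemma aux_stmt_7 {F : Type*} [Field F] {h n : ℕ} (hn : 0 < n)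
    (x y : Fin n → Fin h → RatFunc F)
    (hxy : ∀ i, dotProduct (x i) (y i) ≠ 0) :
    ∀ m, m < n → ∃ (S : Finset (Fin n)) (β : Fin n → ℕ),
      (⟨0, hn⟩ : Fin n) ∈ S ∧ (∀ i ∈ S, (i : ℕ) ≤ m) ∧ (∀ i ∈ S, β i ≤ m) ∧
      ∀ j : Fin n, (j : ℕ) ≤ m →
        dotProduct (∑ i ∈ S, (RatFunc.X : RatFunc F) ^ (β i) • x i) (y j) ≠ 0 := by
  intro m
  induction m with
  | zero =>
    intro _
    refine ⟨{⟨0, hn⟩}, fun _ => 0, Finset.mem_singleton_self _,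
      fun i hi => by rw [Finset.mem_singleton] at hi; subst hi; exact Nat.le_refl 0,
      fun i _ => Nat.le_refl 0, ?_⟩
    intro j hj
    have hj0 : j = ⟨0, hn⟩ := Fin.ext (show (j : ℕ) = 0 by omega)
    subst hj0
    simpa using hxy ⟨0, hn⟩
  | succ m ih =>
    intro hm
    obtain ⟨S, β, h0, hSm, hβm, hdot⟩ := ih (by omega)
    set u : Fin h → RatFunc F := ∑ i ∈ S, (RatFunc.X : RatFunc F) ^ (β i) • x i with hu
    set jm : Fin n := ⟨m + 1, hm⟩ with hjm
    by_cases h1 : dotProduct u (y jm) ≠ 0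
    · refine ⟨S, β, h0, fun i hi => le_trans (hSm i hi) (by omega),
        fun i hi => le_trans (hβm i hi) (by omega), ?_⟩
      intro j hj
      rcases Nat.lt_or_ge (j : ℕ) (m + 1) with hjlt | hjge
      · exact hdot j (by omega)
      · have : j = jm := Fin.ext (show (j : ℕ) = m + 1 by omega)
        rw [this]; exact h1
    · push_neg at h1
      classical
      -- choose a fresh delay b ≤ m+1
      set B : Finset (RatFunc F) :=
        (Finset.univ.filter (fun j : Fin n => (j : ℕ) ≤ m)).image
          (fun j => -(dotProduct u (y j)) / dotProduct (x jm) (y j)) with hB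
      have hBcard : B.card ≤ m + 1 := by
        refine le_trans (Finset.card_image_le) ?_
        have : (Finset.univ.filter (fun j : Fin n => (j : ℕ) ≤ m)).card ≤
            ((Finset.range (m + 1)).card) := by
          refine Finset.card_le_card_of_injOn (fun j => (j : ℕ)) ?_ ?_
          · intro j hj
            simp only [Finset.mem_coe, Finset.mem_filter] at hj
            simp [Nat.lt_succ_iff, hj.2]
          · intro a _ b _ hab; exact Fin.ext hab
        simpa using this
      have hex : ∃ b ∈ Finset.range (m + 2), (RatFunc.X : RatFunc F) ^ b ∉ B := by
        by_contra hcon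
        push_neg at hcon
        have hsub : (Finset.range (m + 2)).image
            (fun b => (RatFunc.X : RatFunc F) ^ b) ⊆ B := by
          intro z hz
          simp only [Finset.mem_image] at hz
          obtain ⟨b, hb, rfl⟩ := hz
          exact hcon b hb
        have hcard : m + 2 ≤ B.card := by
          have := Finset.card_le_card hsub
          rwa [Finset.card_image_of_injective _ X_pow_inj, Finset.card_range] at this
        omega
      obtain ⟨b, hbmem, hbfresh⟩ := hex
      have hble : b ≤ m + 1 := by simpa [Nat.lt_succ_iff] using hbmem
      have hjmS : jm ∉ S := fun hmem => Nat.not_succ_le_self m (hSm jm hmem)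
      refine ⟨insert jm S, Function.update β jm b, Finset.mem_insert_of_mem h0, ?_, ?_, ?_⟩
      · intro i hi
        rcases Finset.mem_insert.mp hi with rfl | hi
        · exact Nat.le_refl (m + 1)
        · exact le_trans (hSm i hi) (by omega)
      · intro i hi
        rcases Finset.mem_insert.mp hi with rfl | hi
        · rw [Function.update_self]; exact hble
        · rw [Function.update_of_ne (by rintro rfl; exact hjmS hi)]
          exact le_trans (hβm i hi) (by omega)
      · intro j hj
        have hsum : (∑ i ∈ insert jm S,
            (RatFunc.X : RatFunc F) ^ (Function.update β jm b i) • x i)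
            = (RatFunc.X : RatFunc F) ^ b • x jm + u := by
          rw [Finset.sum_insert hjmS, Function.update_self, hu]
          congr 1
          refine Finset.sum_congr rfl (fun i hi => ?_)
          rw [Function.update_of_ne (by rintro rfl; exact hjmS hi)]
        rw [hsum, add_dotProduct, smul_dotProduct]
        rcases Nat.lt_or_ge (j : ℕ) (m + 1) with hjlt | hjge
        · -- j ≤ m
          have hdj := hdot j (by omega)
          by_cases hxz : dotProduct (x jm) (y j) = 0
          · simpa [hxz] using hdj
          · intro hcontra
            apply hbfresh
            rw [hB]
            refine Finset.mem_image.mpr ⟨j, ?_, ?_⟩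
            · simp [Nat.lt_succ_iff]; omega
            · rw [div_eq_iff hxz, neg_eq_iff_add_eq_zero, add_comm]
              simpa [smul_eq_mul] using hcontra
        · -- j = jm
          have : j = jm := Fin.ext (show (j : ℕ) = m + 1 by omega)
          rw [this, h1, add_zero]
          simp only [smul_eq_mul]
          exact mul_ne_zero (pow_ne_zero _ RatFunc.X_ne_zero) (hxy jm)

/-- Algebraic core of Proposition 4 (non-uniform delay-and-code): given pairs
`(x i, y i) ∈ F(X)^h × F(X)^h` with `x i · y i ≠ 0` for `1 ≤ i ≤ n`, there are a subset
`S` of the indices containing the first index and delays `β i ≤ n − 1` for `i ∈ S` such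
that `u = Σ_{i ∈ S} X^(β i) • x i` satisfies `u · y j ≠ 0` for all `j`. -/
theorem stmt_7 {F : Type*} [Field F] {h n : ℕ} (hh : 0 < h) (hn : 0 < n)
    (x y : Fin n → Fin h → RatFunc F)
    (hxy : ∀ i, dotProduct (x i) (y i) ≠ 0) :
    ∃ (S : Finset (Fin n)) (β : Fin n → ℕ),
      (⟨0, hn⟩ : Fin n) ∈ S ∧ (∀ i ∈ S, β i ≤ n - 1) ∧
      ∀ j, dotProduct (∑ i ∈ S, (RatFunc.X : RatFunc F) ^ (β i) • x i) (y j) ≠ 0 := by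
  obtain ⟨S, β, h0, _, hβ, hdot⟩ := aux_stmt_7 hn x y hxy (n - 1) (by omega)
  exact ⟨S, β, h0, hβ, fun j => hdot j (by omega)⟩
end

section
/- Let F be a field and h, m, δ, N positive integers, and let x_1, …, x_m ∈ F(X)^h. Suppose for each e ∈ {1, …, δ} we are given an integer n_e with 1 ≤ n_e ≤ N, a strictly increasing map σ_e : {1, …, n_e} → {1, …, m}, and vectors y^e_1, …, y^e_{n_e} ∈ F(X)^h such that x_{σ_e(i)} · y^e_i ≠ 0 for all 1 ≤ i ≤ n_e. Then there exist a single function a : {1, …, m} → {0, 1, …, δ(N−1)} and, for each e, a subset S_e ⊆ {1, …, n_e} with 1 ∈ S_e, such that for every e ∈ {1, …, δ} the vector u_e = Σ_{i ∈ S_e} X^{a(σ_e(i))} · x_{σ_e(i)} satisfies u_e · y^e_j ≠ 0 for all 1 ≤ j ≤ n_e. (This is the algebraic core of Proposition 5: in the uniform delay-and-code scheme, where every outgoing edge of a node must apply the SAME delay a(p) to the symbols arriving on incoming edge p, valid binary global encoding vectors can be chosen simultaneously for all δ outgoing edges of a node, provided at most N ≤ |T| sink flow paths cross each outgoing edge and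 at least δ(N − 1) memory elements are available per incoming edge.) -/
set_option synthInstance.maxHeartbeats 1000000
set_option maxHeartbeats 2000000

open Finset

lemma aux_Xpow_inj {F : Type*} [Field F] :
    Function.Injective (fun v : ℕ => (RatFunc.X : RatFunc F) ^ v) := by
  intro v w hvw
  simp only at hvw
  have h2 : (algebraMap (Polynomial F) (RatFunc F)) (Polynomial.X ^ v)
      = (algebraMap (Polynomial F) (RatFunc F)) (Polynomial.X ^ w) := by
    simpa [map_pow, RatFunc.algebraMap_X] using hvw
  have h3 := RatFunc.algebraMap_injective F h2
  have h4 := congrArg Polynomial.natDegree h3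
  simpa using h4

lemma aux_exists_not_mem (s t : Finset ℕ) (hst : s.card < t.card) : ∃ v ∈ t, v ∉ s := by
  by_contra hc
  push_neg at hc
  exact absurd (Finset.card_le_card hc) (not_le.mpr hst)

lemma aux_sum_dotProduct {F : Type*} [Field F] {h : ℕ} {ι : Type*} (s : Finset ι)
    (u : ι → Fin h → RatFunc F) (w : Fin h → RatFunc F) :
    dotProduct (∑ i ∈ s, u i) w = ∑ i ∈ s, dotProduct (u i) w := by
  classical
  induction s using Finset.induction_on with
  | empty => simp [dotProduct]
  | insert _ _ hns ih =>
    rw [Finset.sum_insert hns, Finset.sum_insert hns, add_dotProduct, ih]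

theorem key_lemma {F : Type*} [Field F] {h m δ N : ℕ}
    (x : Fin m → Fin h → RatFunc F)
    (n : Fin δ → ℕ) (hn1 : ∀ e, 1 ≤ n e) (hnN : ∀ e, n e ≤ N)
    (σ : ∀ e : Fin δ, Fin (n e) → Fin m) (hσ : ∀ e, StrictMono (σ e))
    (y : ∀ e : Fin δ, Fin (n e) → Fin h → RatFunc F)
    (hxy : ∀ e i, dotProduct (x (σ e i)) (y e i) ≠ 0) :
    ∀ t : ℕ, t ≤ m → ∃ (a : Fin m → ℕ) (S : ∀ e : Fin δ, Finset (Fin (n e))),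
      (∀ p, a p ≤ δ * (N - 1)) ∧
      (∀ e i, i ∈ S e → (σ e i : ℕ) < t) ∧
      (∀ e j, (σ e j : ℕ) < t →
        dotProduct (∑ i ∈ S e, (RatFunc.X : RatFunc F) ^ (a (σ e i)) • x (σ e i))
          (y e j) ≠ 0) ∧
      (∀ e, (σ e ⟨0, hn1 e⟩ : ℕ) < t → (⟨0, hn1 e⟩ : Fin (n e)) ∈ S e) := by
  classical
  intro t
  induction t with
  | zero =>
    exact fun _ => ⟨fun _ => 0, fun _ => ∅, fun p => Nat.zero_le _, by simp, by simp, by simp⟩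
  | succ t ih =>
    intro htm
    obtain ⟨a, S, hab, hmem, hinv, h0⟩ := ih (Nat.le_of_succ_le htm)
    set p : Fin m := ⟨t, htm⟩ with hp
    set R : ℕ := δ * (N - 1) + 1 with hR
    -- old sums
    set os : ∀ e : Fin δ, Fin h → RatFunc F :=
      fun e => ∑ i ∈ S e, (RatFunc.X : RatFunc F) ^ (a (σ e i)) • x (σ e i) with hos
    -- indices added at this step
    set Je : ∀ e : Fin δ, Finset (Fin (n e)) :=
      fun e => Finset.univ.filter
        (fun j => σ e j = p ∧ dotProduct (os e) (y e j) = 0) with hJe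
    have hJe_sub : ∀ e, ∀ j1 ∈ Je e, ∀ j2 ∈ Je e, j1 = j2 := by
      intro e j1 hj1 j2 hj2
      simp only [hJe, Finset.mem_filter] at hj1 hj2
      exact (hσ e).injective (hj1.2.1.trans hj2.2.1.symm)
    -- bad values
    set bad : Fin δ → Finset ℕ := fun e =>
      if (Je e).Nonempty then
        (Finset.univ.filter (fun j' : Fin (n e) => (σ e j' : ℕ) < t)).biUnion
          (fun j' => (Finset.range R).filter (fun v =>
            dotProduct (os e) (y e j')
              + (RatFunc.X : RatFunc F) ^ v * dotProduct (x p) (y e j') = 0))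
      else ∅ with hbad
    have hbad_card : ∀ e, (bad e).card ≤ N - 1 := by
      intro e
      simp only [hbad]
      by_cases hne : (Je e).Nonempty
      · rw [if_pos hne]
        obtain ⟨j0, hj0⟩ := hne
        simp only [hJe, Finset.mem_filter] at hj0
        refine le_trans (Finset.card_biUnion_le) ?_
        have h1 : ∀ j' ∈ (Finset.univ.filter (fun j' : Fin (n e) => (σ e j' : ℕ) < t)),
            ((Finset.range R).filter (fun v =>
              dotProduct (os e) (y e j')
                + (RatFunc.X : RatFunc F) ^ v * dotProduct (x p) (y e j') = 0)).card ≤ 1 := by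
          intro j' hj'
          simp only [Finset.mem_filter] at hj'
          apply Finset.card_le_one.mpr
          intro v1 hv1 v2 hv2
          simp only [Finset.mem_filter] at hv1 hv2
          have hc : dotProduct (x p) (y e j') ≠ 0 := by
            intro hc0
            apply hinv e j' hj'.2
            have := hv1.2
            rw [hc0, mul_zero, add_zero] at this
            exact this
          have : (RatFunc.X : RatFunc F) ^ v1 * dotProduct (x p) (y e j')
              = (RatFunc.X : RatFunc F) ^ v2 * dotProduct (x p) (y e j') := by
            have e1 := hv1.2; have e2 := hv2.2
            linear_combination e1 - e2
          exact aux_Xpow_inj (mul_right_cancel₀ hc this)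
        calc (∑ j' ∈ (Finset.univ.filter (fun j' : Fin (n e) => (σ e j' : ℕ) < t)), _)
            ≤ ∑ j' ∈ (Finset.univ.filter (fun j' : Fin (n e) => (σ e j' : ℕ) < t)), 1 :=
              Finset.sum_le_sum h1
          _ = (Finset.univ.filter (fun j' : Fin (n e) => (σ e j' : ℕ) < t)).card := by simp
          _ ≤ N - 1 := by
              have hsub : (Finset.univ.filter (fun j' : Fin (n e) => (σ e j' : ℕ) < t))
                  ⊆ Finset.Iio j0 := by
                intro j' hj'
                simp only [Finset.mem_filter] at hj'
                rw [Finset.mem_Iio]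
                have : σ e j' < σ e j0 := by
                  rw [hj0.2.1]
                  exact Fin.lt_def.mpr hj'.2
                exact (hσ e).lt_iff_lt.mp this
              refine le_trans (Finset.card_le_card hsub) ?_
              rw [Fin.card_Iio]
              have h5 : (j0 : ℕ) < n e := j0.isLt
              have h6 := hnN e
              omega
      · rw [if_neg hne]; exact Nat.zero_le _
    set B : Finset ℕ := Finset.univ.biUnion bad with hB
    have hB_card : B.card < R := by
      have : B.card ≤ δ * (N - 1) := by
        refine le_trans Finset.card_biUnion_le ?_
        calc (∑ e, (bad e).card) ≤ ∑ _e : Fin δ, (N - 1) := Finset.sum_le_sum fun e _ => hbad_card e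
          _ = δ * (N - 1) := by simp [mul_comm]
      omega
    obtain ⟨v, hvR, hvB⟩ := aux_exists_not_mem B (Finset.range R) (by rwa [Finset.card_range])
    rw [Finset.mem_range] at hvR
    -- new data
    set a' : Fin m → ℕ := Function.update a p v with ha'
    set S' : ∀ e : Fin δ, Finset (Fin (n e)) := fun e => S e ∪ Je e with hS'
    have hσ_ne : ∀ e i, i ∈ S e → σ e i ≠ p := by
      intro e i hi hip
      have := hmem e i hi
      rw [hip] at this
      simp [hp] at this
    -- new sum formula
    have hns : ∀ e, (∑ i ∈ S' e, (RatFunc.X : RatFunc F) ^ (a' (σ e i)) • x (σ e i))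
        = os e + ∑ _j ∈ Je e, (RatFunc.X : RatFunc F) ^ v • x p := by
      intro e
      have hdisj : Disjoint (S e) (Je e) := by
        rw [Finset.disjoint_right]
        intro j hjJ hjS
        simp only [hJe, Finset.mem_filter] at hjJ
        exact hσ_ne e j hjS hjJ.2.1
      simp only [hS']
      rw [Finset.sum_union hdisj]
      congr 1
      · simp only [hos]
        apply Finset.sum_congr rfl
        intro i hi
        rw [ha', Function.update_of_ne (hσ_ne e i hi)]
      · apply Finset.sum_congr rfl
        intro j hj
        simp only [hJe, Finset.mem_filter] at hj
        rw [hj.2.1, ha', Function.update_self]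
    -- the dot product of new sum with y e j
    have hdot : ∀ e j, dotProduct
        (∑ i ∈ S' e, (RatFunc.X : RatFunc F) ^ (a' (σ e i)) • x (σ e i)) (y e j)
        = dotProduct (os e) (y e j)
          + ∑ _j0 ∈ Je e, (RatFunc.X : RatFunc F) ^ v * dotProduct (x p) (y e j) := by
      intro e j
      rw [hns e, add_dotProduct, aux_sum_dotProduct, aux_sum_dotProduct]
      simp only [smul_dotProduct, smul_eq_mul]
    refine ⟨a', S', ?_, ?_, ?_, ?_⟩
    · intro q
      rw [ha']
      by_cases hq : q = p
      · rw [hq, Function.update_self]; omega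
      · rw [Function.update_of_ne hq]; exact hab q
    · intro e i hi
      simp only [hS', Finset.mem_union] at hi
      rcases hi with hi | hi
      · exact Nat.lt_succ_of_lt (hmem e i hi)
      · simp only [hJe, Finset.mem_filter] at hi
        rw [hi.2.1]
        exact Nat.lt_succ_self t
    · intro e j hj
      rw [hdot e j]
      rcases Finset.eq_empty_or_nonempty (Je e) with hemp | ⟨j0, hj0⟩
      · -- nothing added
        rw [hemp, Finset.sum_empty, add_zero]
        rcases Nat.lt_succ_iff_lt_or_eq.mp hj with hjt | hjt
        · exact hinv e j hjt
        · -- σ e j = p but j ∉ Je e : old sum nonzero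
          intro hzero
          have hjJe : j ∈ Je e := by
            simp only [hJe, Finset.mem_filter]
            exact ⟨Finset.mem_univ _, Fin.ext hjt, hzero⟩
          rw [hemp] at hjJe
          exact absurd hjJe (Finset.notMem_empty j)
      · -- something added; Je e = {j0}
        have hJeq : Je e = {j0} := by
          apply Finset.eq_singleton_iff_unique_mem.mpr
          exact ⟨hj0, fun j1 hj1 => hJe_sub e j1 hj1 j0 hj0⟩
        rw [hJeq, Finset.sum_singleton]
        simp only [hJe, Finset.mem_filter] at hj0
        rcases Nat.lt_succ_iff_lt_or_eq.mp hj with hjt | hjt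
        · -- old constraint: v avoids bad values
          intro hzero
          apply hvB
          simp only [hB, Finset.mem_biUnion]
          refine ⟨e, Finset.mem_univ _, ?_⟩
          simp only [hbad]
          rw [if_pos ⟨j0, by rw [hJeq]; exact Finset.mem_singleton_self j0⟩]
          rw [Finset.mem_biUnion]
          refine ⟨j, Finset.mem_filter.mpr ⟨Finset.mem_univ _, hjt⟩, ?_⟩
          rw [Finset.mem_filter]
          exact ⟨Finset.mem_range.mpr hvR, hzero⟩
        · -- new constraint j = j0
          have hjj0 : j = j0 := (hσ e).injective (by rw [hj0.2.1]; exact Fin.ext hjt)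
          rw [← hjj0] at hj0
          rw [hj0.2.2, zero_add]
          have hσj : σ e j = p := hj0.2.1
          rw [← hσj]
          exact mul_ne_zero (pow_ne_zero v RatFunc.X_ne_zero) (hxy e j)
      -- done main invariant
    · intro e hσ0
      simp only [hS', Finset.mem_union]
      rcases Nat.lt_succ_iff_lt_or_eq.mp hσ0 with hlt | heq
      · exact Or.inl (h0 e hlt)
      · right
        simp only [hJe, Finset.mem_filter]
        refine ⟨Finset.mem_univ _, Fin.ext heq, ?_⟩
        have hSe : S e = ∅ := by
          apply Finset.eq_empty_iff_forall_notMem.mpr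
          intro i hi
          have h1 : (σ e i : ℕ) < t := hmem e i hi
          have h2 : σ e i < σ e ⟨0, hn1 e⟩ := by
            rw [Fin.lt_def]
            omega
          have := (hσ e).lt_iff_lt.mp h2
          exact absurd this (by simp [Fin.lt_def])
        simp only [hos]
        rw [hSe, Finset.sum_empty, zero_dotProduct]

/-- Algebraic core of Proposition 5 (uniform delay-and-code): with `x 1, …, x m ∈ F(X)^h`,
suppose each outgoing edge `e ∈ {1, …, δ}` comes with `n e ≤ N` flow paths, a strictly
increasing selection `σ e` of incoming edges, and vectors `y e i` with
`x (σ e i) · y e i ≠ 0`. Then there are a single delay function `a : {1,…,m} → {0,…,δ(N−1)}`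
and subsets `S e` of the flow-path indices, each containing the first index, such that
for every `e` the vector `u e = Σ_{i ∈ S e} X^(a (σ e i)) • x (σ e i)` satisfies
`u e · y e j ≠ 0` for all `j`. -/
theorem stmt_8 {F : Type*} [Field F] {h m δ N : ℕ}
    (hh : 0 < h) (hm : 0 < m) (hδ : 0 < δ) (hN : 0 < N)
    (x : Fin m → Fin h → RatFunc F)
    (n : Fin δ → ℕ) (hn1 : ∀ e, 1 ≤ n e) (hnN : ∀ e, n e ≤ N)
    (σ : ∀ e : Fin δ, Fin (n e) → Fin m) (hσ : ∀ e, StrictMono (σ e))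
    (y : ∀ e : Fin δ, Fin (n e) → Fin h → RatFunc F)
    (hxy : ∀ e i, dotProduct (x (σ e i)) (y e i) ≠ 0) :
    ∃ (a : Fin m → ℕ) (S : ∀ e : Fin δ, Finset (Fin (n e))),
      (∀ p, a p ≤ δ * (N - 1)) ∧
      ∀ e : Fin δ, (⟨0, hn1 e⟩ : Fin (n e)) ∈ S e ∧
        ∀ j, dotProduct
          (∑ i ∈ S e, (RatFunc.X : RatFunc F) ^ (a (σ e i)) • x (σ e i)) (y e j) ≠ 0 := by
  obtain ⟨a, S, hab, hmem, hinv, h0⟩ :=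
    key_lemma x n hn1 hnN σ hσ y hxy m le_rfl
  exact ⟨a, S, hab, fun e => ⟨h0 e (σ e ⟨0, hn1 e⟩).isLt, fun j => hinv e j (σ e j).isLt⟩⟩
end

section
/- In the polynomial ring F_2[X] over the binary field, there do not exist nonnegative integers a_4, a_5, a_6, b_4, b_5, b_6, c_4, c_5, c_6, ã, b̃, c̃, d and elements m_1, m_2, m_3 ∈ F_2, not all zero, satisfying simultaneously: m_1 X^{ã + a_4} + m_2 X^{b̃ + a_5} + m_3 X^{c̃ + a_6} = X^d, m_1 X^{ã + b_4} + m_2 X^{b̃ + b_5} + m_3 X^{c̃ + b_6} = 0, and m_1 X^{ã + c_4} + m_2 X^{b̃ + c_5} + m_3 X^{c̃ + c_6} = 0. (This is the impossibility claim proved in the final example of the paper for the augmented (6,3)-combination network: no delay-and-code based linear combination of three all-monomial global encoding vectors can produce a vector of the form (X^d, 0, 0)^T over F_2, so the delay-and-code scheme cannot satisfy all sink demands in that non-multicast network.) -/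
open Polynomial

/-- Impossibility claim in the final example of the paper: over `F₂[X]`, no delay-and-code
based linear combination of three all-monomial global encoding vectors can produce a
vector of the form `(X^d, 0, 0)ᵀ`. -/
theorem stmt_9 :
    ¬ ∃ (a₄ a₅ a₆ b₄ b₅ b₆ c₄ c₅ c₆ ta tb tc d : ℕ) (m₁ m₂ m₃ : ZMod 2),
      ¬(m₁ = 0 ∧ m₂ = 0 ∧ m₃ = 0) ∧
      (C m₁ * X ^ (ta + a₄) + C m₂ * X ^ (tb + a₅) + C m₃ * X ^ (tc + a₆)
        = (X ^ d : Polynomial (ZMod 2))) ∧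
      (C m₁ * X ^ (ta + b₄) + C m₂ * X ^ (tb + b₅) + C m₃ * X ^ (tc + b₆)
        = (0 : Polynomial (ZMod 2))) ∧
      (C m₁ * X ^ (ta + c₄) + C m₂ * X ^ (tb + c₅) + C m₃ * X ^ (tc + c₆)
        = (0 : Polynomial (ZMod 2))) := by
  rintro ⟨a₄,a₅,a₆,b₄,b₅,b₆,c₄,c₅,c₆,ta,tb,tc,d,m₁,m₂,m₃,_,h1,h2,_⟩
  have e1 := congrArg (eval 1) h1
  have e2 := congrArg (eval 1) h2
  simp at e1 e2
  rw [e2] at e1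
  exact one_ne_zero e1.symm
end

section
/- Any set of pairwise linearly independent nonzero vectors in F_2^2 has at most 3 elements; however, the field F_2(X) of rational functions over F_2 admits four pairwise linearly independent vectors in F_2(X)^2, namely (X^3, 0), (X^5, X^5), (0, X^3) and (X^5, X^5 + X^3). (This is the content of Example 2: for the cascaded butterfly/(4,2)-combination network, a feasible network code for the instantaneous network requires field size at least 3 since any two of the four global encoding vectors must be linearly independent, whereas the unit-delay network admits a feasible binary network code with precisely these four global encoding vectors; hence the minimum field size of the unit-delay network can be strictly smaller than that of the corresponding instantaneous network.) -/
/-- The four global encoding vectors of Example 2, as vectors in `F₂(X)²`: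
`(X³, 0)`, `(X⁵, X⁵)`, `(0, X³)` and `(X⁵, X⁵ + X³)`. -/
noncomputable def exampleVecs : Fin 4 → Fin 2 → RatFunc (ZMod 2) :=
  ![![RatFunc.X ^ 3, 0],
    ![RatFunc.X ^ 5, RatFunc.X ^ 5],
    ![0, RatFunc.X ^ 3],
    ![RatFunc.X ^ 5, RatFunc.X ^ 5 + RatFunc.X ^ 3]]

lemma li_pair_of_det {K : Type*} [Field K] (u v : Fin 2 → K)
    (h : u 0 * v 1 - u 1 * v 0 ≠ 0) : LinearIndependent K ![u, v] := by
  rw [LinearIndependent.pair_iff]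
  intro s t hst
  have h0 : s * u 0 + t * v 0 = 0 := congrFun hst 0
  have h1 : s * u 1 + t * v 1 = 0 := congrFun hst 1
  constructor
  · have : s * (u 0 * v 1 - u 1 * v 0) = 0 := by
      linear_combination v 1 * h0 - v 0 * h1
    exact (mul_eq_zero.mp this).resolve_right h
  · have : t * (u 0 * v 1 - u 1 * v 0) = 0 := by
      linear_combination u 0 * h1 - u 1 * h0
    exact (mul_eq_zero.mp this).resolve_right h

lemma X53_ne : (RatFunc.X : RatFunc (ZMod 2)) ^ 5 + RatFunc.X ^ 3 ≠ 0 := by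
  have h : (Polynomial.X : Polynomial (ZMod 2)) ^ 5 + Polynomial.X ^ 3 ≠ 0 := by
    intro h
    simpa using congrArg (fun p => Polynomial.coeff p 5) h
  have := RatFunc.algebraMap_ne_zero h
  simpa using this

lemma X8_ne : (RatFunc.X : RatFunc (ZMod 2)) ^ 8 ≠ 0 :=
  pow_ne_zero _ RatFunc.X_ne_zero

/-- Content of Example 2: any set of pairwise linearly independent nonzero vectors in
`F₂²` has at most 3 elements, whereas `F₂(X)²` contains the four pairwise linearly
independent vectors `(X³, 0)`, `(X⁵, X⁵)`, `(0, X³)` and `(X⁵, X⁵ + X³)`; hence the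
minimum field size of the unit-delay network can be strictly smaller than that of the
corresponding instantaneous network. -/
theorem stmt_11 :
    (∀ S : Finset (Fin 2 → ZMod 2), (∀ v ∈ S, v ≠ 0) →
      (∀ u ∈ S, ∀ v ∈ S, u ≠ v → LinearIndependent (ZMod 2) ![u, v]) →
      S.card ≤ 3) ∧
    (∀ i j : Fin 4, i ≠ j →
      LinearIndependent (RatFunc (ZMod 2)) ![exampleVecs i, exampleVecs j]) := by
  constructor
  · intro S h0 _
    have hsub : S ⊆ Finset.univ \ {0} := by
      intro v hv
      simp [h0 v hv]
    calc S.card ≤ (Finset.univ \ ({0} : Finset (Fin 2 → ZMod 2))).card :=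
          Finset.card_le_card hsub
      _ ≤ 3 := by decide
  · intro i j hij
    fin_cases i <;> fin_cases j <;> simp_all <;>
      apply li_pair_of_det <;> simp [exampleVecs] <;>
      first
        | exact RatFunc.X_ne_zero
        | exact ⟨RatFunc.X_ne_zero, X53_ne⟩
        | exact ⟨X53_ne, RatFunc.X_ne_zero⟩
        | (intro h; exact X8_ne (by linear_combination h))
        | (intro h; exact X8_ne (by linear_combination -h))
end
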